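/- Under the stability assumption, for any fixed β ∈ (0,1), the asymptotic normalized risk of fixed surprise highlighting for a sophisticated agent, namely E[(1/d) Σ_{j=⌊βd⌋+1}^{d} (X*_{d,(j)} − p*_{d,(j)})²] = (1/d) Σ_{j=⌊βd⌋+1}^{d} p*_{d,(j)}(1 − p*_{d,(j)}), converges as d → ∞ to ∫_β^1 Q*(q)(1 − Q*(q)) dq. -/

import Mathlib

/-!
The expectation is a sum of Bernoulli variances: folding `X ↦ 1 - X` when `p > 1/2` turns
`(X* - p*)²` into `(X - p)²` and `p*(1 - p*)` into `p(1 - p)`.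

For the limit, `(1/d) Σ_{j ≥ ⌊βd⌋} g(p*_{d,(j)})` is the integral of a step function equal to
`g(p*_{d,(⌊qd⌋)})` at `q ∈ [⌊βd⌋/d, 1)`, so by dominated convergence it suffices that the order
statistics `p*_{d,(⌊qd⌋)}` converge to `Q*(q)` for almost every `q ∈ (β, 1)`. They do so at every
continuity point of the monotone function `Q*`, because the empirical cdf of the `p*_{d,i}`
converges to `F*` on `(0, 1/2)`: for `t < 1/2` it is the empirical cdf of the `p_{d,i}` at `t`
plus that of the `1 - p_{d,i}` at `t`. The stability assumption applies at `t` and near `1 - t`,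
since `F` is continuous off `1/2`: `F(s) - F(1 - s) = F*(s) - 1` is continuous, and `F(s)`,
`-F(1 - s)` are both nondecreasing.
-/

open Finset MeasureTheory ProbabilityTheory Filter Topology

lemma sq_sub_eq_of_eq_zero_or_eq_one {x : ℝ} (hx : x = 0 ∨ x = 1) (c : ℝ) :
    (x - c) ^ 2 = (1 - 2 * c) * x + c ^ 2 := by
  rcases hx with rfl | rfl <;> ring

section Bernoulli

variable {Ω : Type*} [MeasurableSpace Ω] {μ : Measure Ω} {X : Ω → ℝ} {p : ℝ}

lemma integrable_of_eq_zero_or_eq_one [IsFiniteMeasure μ] (hmeas : Measurable X)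
    (hX : ∀ ω, X ω = 0 ∨ X ω = 1) : Integrable X μ :=
  .of_mem_Icc 0 1 hmeas.aemeasurable <| ae_of_all _ fun ω => by rcases hX ω with h | h <;> simp [h]

lemma integrable_sq_sub_of_eq_zero_or_eq_one [IsFiniteMeasure μ] (hmeas : Measurable X)
    (hX : ∀ ω, X ω = 0 ∨ X ω = 1) (c : ℝ) : Integrable (fun ω => (X ω - c) ^ 2) μ := by
  simp_rw [sq_sub_eq_of_eq_zero_or_eq_one (hX _)]
  exact ((integrable_of_eq_zero_or_eq_one hmeas hX).const_mul _).add (integrable_const _)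

lemma integral_eq_of_bernoulli (hmeas : Measurable X) (hX : ∀ ω, X ω = 0 ∨ X ω = 1)
    (hp : 0 ≤ p) (hbern : μ {ω | X ω = 1} = ENNReal.ofReal p) :
    ∫ ω, X ω ∂μ = p := by
  have hind : X = {ω | X ω = 1}.indicator 1 := by
    funext ω
    rcases hX ω with h | h <;> simp [h]
  rw [hind, integral_indicator_one (s := {ω | X ω = 1}) (hmeas (measurableSet_singleton 1)),
    measureReal_def, hbern, ENNReal.toReal_ofReal hp]

lemma integral_sq_sub_of_bernoulli [IsProbabilityMeasure μ] (hmeas : Measurable X)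
    (hX : ∀ ω, X ω = 0 ∨ X ω = 1) (hp : 0 ≤ p) (hbern : μ {ω | X ω = 1} = ENNReal.ofReal p) :
    ∫ ω, (X ω - p) ^ 2 ∂μ = p * (1 - p) := by
  simp_rw [sq_sub_eq_of_eq_zero_or_eq_one (hX _)]
  rw [integral_add ((integrable_of_eq_zero_or_eq_one hmeas hX).const_mul _) (integrable_const _),
    integral_const_mul, integral_eq_of_bernoulli hmeas hX hp hbern, integral_const,
    probReal_univ, one_smul]
  ring

lemma integral_const_mul_sum_sq_sub_of_bernoulli [IsProbabilityMeasure μ] {ι : Type*}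
    (s : Finset ι) (c : ℝ) {Y : ι → Ω → ℝ} {m : ι → ℝ} (hmeas : ∀ i, Measurable (Y i))
    (hY : ∀ i ω, Y i ω = 0 ∨ Y i ω = 1) (hm : ∀ i ∈ s, 0 ≤ m i)
    (hbern : ∀ i ∈ s, μ {ω | Y i ω = 1} = ENNReal.ofReal (m i)) :
    ∫ ω, c * ∑ i ∈ s, (Y i ω - m i) ^ 2 ∂μ = c * ∑ i ∈ s, m i * (1 - m i) := by
  rw [integral_const_mul, integral_finsetSum _ fun i _ =>
    integrable_sq_sub_of_eq_zero_or_eq_one (hmeas i) (hY i) _]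
  exact congrArg _ <| sum_congr rfl fun i hi =>
    integral_sq_sub_of_bernoulli (hmeas i) (hY i) (hm i hi) (hbern i hi)

end Bernoulli

lemma sq_fold_sub_min (x p : ℝ) :
    ((if p ≤ 1 / 2 then x else 1 - x) - min p (1 - p)) ^ 2 = (x - p) ^ 2 := by
  split_ifs with h
  · rw [min_eq_left (by linarith)]
  · rw [min_eq_right (by linarith)]; ring

lemma min_one_sub_mul_one_sub (p : ℝ) :
    min p (1 - p) * (1 - min p (1 - p)) = p * (1 - p) := by
  rcases le_total p (1 - p) with h | h
  · rw [min_eq_left h]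
  · rw [min_eq_right h]; ring

lemma min_one_sub_mem_Icc {p : ℝ} (hp : p ∈ Set.Icc 0 1) :
    min p (1 - p) ∈ Set.Icc 0 (1 / 2) := by
  refine ⟨le_min hp.1 (by linarith [hp.2]), ?_⟩
  rcases le_total p (1 / 2) with h | h
  · exact min_le_of_left_le h
  · exact min_le_of_right_le (by linarith)

lemma ContinuousAt.of_monotoneOn_of_add {f g : ℝ → ℝ} {s : Set ℝ} {x : ℝ} (hs : s ∈ 𝓝 x)
    (hf : MonotoneOn f s) (hg : MonotoneOn g s) (hfg : ContinuousAt (f + g) x) :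
    ContinuousAt f x := by
  have hx : x ∈ s := mem_of_mem_nhds hs
  -- the increments of `f` and `g` have the same sign
  have hle : ∀ y ∈ s, dist (f y) (f x) ≤ dist ((f + g) y) ((f + g) x) := by
    intro y hy
    simp only [Real.dist_eq, Pi.add_apply]
    rcases le_total y x with hyx | hxy
    · have := hf hy hx hyx; have := hg hy hx hyx
      rw [abs_of_nonpos (by linarith), abs_of_nonpos (by linarith)]; linarith
    · have := hf hx hy hxy; have := hg hx hy hxy
      rw [abs_of_nonneg (by linarith), abs_of_nonneg (by linarith)]; linarith
  rw [ContinuousAt, tendsto_iff_dist_tendsto_zero] at hfg ⊢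
  exact squeeze_zero' (.of_forall fun _ => dist_nonneg) (eventually_of_mem hs hle) hfg

lemma continuousAt_of_continuousOn_fold {F Fs : ℝ → ℝ} (hF : MonotoneOn F (Set.Icc 0 1))
    (hFs : ∀ s ≤ 1 / 2, Fs s = F s + 1 - F (1 - s)) (hcont : ContinuousOn Fs (Set.Icc 0 1))
    {t : ℝ} (ht : t ∈ Set.Ioo 0 1) (ht2 : t ≠ 1 / 2) : ContinuousAt F t := by
  have hlower : ∀ t ∈ Set.Ioo 0 (1 / 2), ContinuousAt (fun s => F s - F (1 - s)) t := by
    intro t ht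
    have : ContinuousAt Fs t := hcont.continuousAt (Icc_mem_nhds ht.1 (by linarith [ht.2]))
    refine (this.sub (continuousAt_const (y := 1))).congr
      (eventually_of_mem (Iio_mem_nhds ht.2) fun s hs => ?_)
    rw [Pi.sub_apply, hFs s hs.le]
    ring
  have hdiff : ContinuousAt (fun s => F s - F (1 - s)) t := by
    rcases ht2.lt_or_gt with h | h
    · exact hlower t ⟨ht.1, h⟩
    · convert ((hlower (1 - t) ⟨by linarith [ht.2], by linarith⟩).comp
        (f := fun s => 1 - s) (by fun_prop)).neg using 1
      ext s
      simp only [Function.comp_apply, Pi.neg_apply, sub_sub_cancel, neg_sub]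
  have hreflect : MonotoneOn (fun s => -F (1 - s)) (Set.Icc 0 1) := fun a ha b hb hab =>
    neg_le_neg <| hF ⟨by linarith [hb.2], by linarith [hb.1]⟩
      ⟨by linarith [ha.2], by linarith [ha.1]⟩ (by linarith)
  exact .of_monotoneOn_of_add (Icc_mem_nhds ht.1 ht.2) hF hreflect
    (hdiff.congr (.of_forall fun s => sub_eq_add_neg _ _))

noncomputable def empiricalCDF (x : ℕ → ℝ) (n : ℕ) (t : ℝ) : ℝ :=
  (1 / (n : ℝ)) * ∑ i ∈ range n, if x i ≤ t then (1 : ℝ) else 0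

namespace empiricalCDF

variable {x : ℕ → ℝ} {n : ℕ} {s t : ℝ}

lemma mul_natCast : empiricalCDF x n t * n = #{i ∈ range n | x i ≤ t} := by
  rcases n.eq_zero_or_pos with rfl | hn
  · simp
  · rw [empiricalCDF, sum_boole]
    field_simp

lemma comp_of_bijOn {σ : ℕ → ℕ} (hσ : Set.BijOn σ (Set.Iio n) (Set.Iio n)) :
    empiricalCDF (fun j => x (σ j)) n t = empiricalCDF x n t := by
  rw [empiricalCDF, empiricalCDF]
  congr 1
  exact sum_nbij σ (fun j hj => by simpa using hσ.mapsTo (by simpa using hj))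
    (by simpa using hσ.injOn) (by simpa using hσ.surjOn) fun _ _ => rfl

lemma min_one_sub (ht : t < 1 / 2) :
    empiricalCDF (fun i => min (x i) (1 - x i)) n t
      = empiricalCDF x n t + empiricalCDF (fun i => 1 - x i) n t := by
  rw [empiricalCDF, empiricalCDF, empiricalCDF, ← mul_add, ← sum_add_distrib]
  congr 1
  refine sum_congr rfl fun i _ => ?_
  by_cases h1 : x i ≤ t
  · rw [if_pos (min_le_of_left_le h1), if_pos h1, if_neg (by linarith)]; ring
  · by_cases h2 : 1 - x i ≤ t
    · rw [if_pos (min_le_of_right_le h2), if_neg h1, if_pos h2]; ring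
    · rw [if_neg (by simp [h1, h2]), if_neg h1, if_neg h2]; ring

lemma add_one_sub_le_one (h : s + t < 1) :
    empiricalCDF x n s + empiricalCDF (fun i => 1 - x i) n t ≤ 1 := by
  rw [empiricalCDF, empiricalCDF, ← mul_add, ← sum_add_distrib]
  have hsum : ∑ i ∈ range n, ((if x i ≤ s then (1 : ℝ) else 0) + if 1 - x i ≤ t then 1 else 0)
      ≤ n := by
    refine (sum_le_card_nsmul _ _ 1 fun i _ => ?_).trans (by simp)
    split_ifs <;> linarith
  rcases n.eq_zero_or_pos with rfl | hn
  · simp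
  · rw [one_div_mul_eq_div, div_le_one (by positivity)]; exact hsum

lemma one_le_add_one_sub (hn : n ≠ 0) (h : 1 ≤ s + t) :
    1 ≤ empiricalCDF x n s + empiricalCDF (fun i => 1 - x i) n t := by
  rw [empiricalCDF, empiricalCDF, ← mul_add, ← sum_add_distrib]
  have hsum : (n : ℝ) ≤
      ∑ i ∈ range n, ((if x i ≤ s then (1 : ℝ) else 0) + if 1 - x i ≤ t then 1 else 0) := by
    refine (by simp : (n : ℝ) = #(range n) • (1 : ℝ)).le.trans
      (card_nsmul_le_sum _ _ 1 fun i _ => ?_)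
    split_ifs <;> linarith
  rw [one_div_mul_eq_div, one_le_div (by positivity)]; exact hsum

end empiricalCDF

lemma tendsto_empiricalCDF_one_sub {x : ℕ → ℕ → ℝ} {F : ℝ → ℝ} {u : ℝ}
    (hlim : ∀ᶠ s in 𝓝[≤] u, Tendsto (fun n => empiricalCDF (x n) n s) atTop (𝓝 (F s)))
    (hF : ContinuousWithinAt F (Set.Iio u) u) :
    Tendsto (fun n => empiricalCDF (fun i => 1 - x n i) n (1 - u)) atTop (𝓝 (1 - F u)) := by
  -- `#{i | u ≤ x i}` lies between `n - #{i | x i ≤ u}` and `n - #{i | x i ≤ s}` for `s < u`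
  rw [tendsto_order]
  constructor
  · intro b hb
    filter_upwards [(hlim.self_of_nhdsWithin (Set.mem_Iic.2 le_rfl)).eventually
      (gt_mem_nhds (by linarith : F u < 1 - b)), eventually_ne_atTop 0] with n hn hn0
    have := empiricalCDF.one_le_add_one_sub (x := x n) (s := u) (t := 1 - u) hn0 (by linarith)
    linarith
  · intro b hb
    obtain ⟨s, hs_lim, hFs, hsu⟩ : ∃ s, Tendsto (fun n => empiricalCDF (x n) n s) atTop (𝓝 (F s))
        ∧ 1 - b < F s ∧ s < u :=
      ((hlim.filter_mono (nhdsWithin_mono _ Set.Iio_subset_Iic_self)).and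
        ((hF.eventually (lt_mem_nhds (by linarith))).and self_mem_nhdsWithin)).exists
    filter_upwards [hs_lim.eventually (lt_mem_nhds hFs)] with n hn
    have := empiricalCDF.add_one_sub_le_one (x := x n) (n := n) (s := s) (t := 1 - u)
      (by linarith)
    linarith

lemma tendsto_empiricalCDF_min_one_sub {x : ℕ → ℕ → ℝ} {F Fs : ℝ → ℝ}
    (hF : MonotoneOn F (Set.Icc 0 1)) (hFs : ∀ s ≤ 1 / 2, Fs s = F s + 1 - F (1 - s))
    (hcont : ContinuousOn Fs (Set.Icc 0 1))
    (hstab : ∀ t ∈ Set.Icc (0 : ℝ) 1, ContinuousWithinAt F (Set.Icc 0 1) t →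
      Tendsto (fun n => empiricalCDF (x n) n t) atTop (𝓝 (F t)))
    {t : ℝ} (ht : t ∈ Set.Ioo 0 (1 / 2)) :
    Tendsto (fun n => empiricalCDF (fun i => min (x n i) (1 - x n i)) n t) atTop
      (𝓝 (Fs t)) := by
  obtain ⟨ht0, ht1⟩ := ht
  have hFc : ∀ s ∈ Set.Ioo 0 1, s ≠ 1 / 2 → ContinuousAt F s :=
    fun s hs hs2 => continuousAt_of_continuousOn_fold hF hFs hcont hs hs2
  have hlim : ∀ s ∈ Set.Ioo 0 1, s ≠ 1 / 2 →
      Tendsto (fun n => empiricalCDF (x n) n s) atTop (𝓝 (F s)) := fun s hs hs2 =>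
    hstab s ⟨hs.1.le, hs.2.le⟩ (hFc s hs hs2).continuousWithinAt
  have hnear : ∀ᶠ s in 𝓝[≤] (1 - t), s ∈ Set.Ioo 0 1 ∧ s ≠ 1 / 2 :=
    nhdsWithin_le_nhds <| Filter.mem_of_superset
      (Ioo_mem_nhds (by linarith : (1 : ℝ) / 2 < 1 - t) (by linarith : 1 - t < 1))
      fun s hs => ⟨⟨by linarith [hs.1], hs.2⟩, hs.1.ne'⟩
  have hright := tendsto_empiricalCDF_one_sub (hnear.mono fun s hs => hlim s hs.1 hs.2)
    (hFc (1 - t) ⟨by linarith, by linarith⟩ (by linarith)).continuousWithinAt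
  rw [sub_sub_cancel] at hright
  rw [hFs t ht1.le, add_sub_assoc]
  simp_rw [empiricalCDF.min_one_sub ht1]
  exact (hlim t ⟨ht0, by linarith⟩ ht1.ne).add hright

lemma le_iff_add_one_le_card_filter {x : ℕ → ℝ} {n j : ℕ} {t : ℝ}
    (hmono : ∀ j j', j ≤ j' → j' < n → x j ≤ x j') (hj : j < n) :
    x j ≤ t ↔ j + 1 ≤ #{i ∈ range n | x i ≤ t} := by
  constructor
  · intro hjt
    calc j + 1 = #(range (j + 1)) := (card_range _).symm
      _ ≤ #{i ∈ range n | x i ≤ t} := card_le_card fun i hi => by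
        rw [mem_range] at hi
        exact mem_filter.2 ⟨mem_range.2 (by omega), (hmono i j (by omega) hj).trans hjt⟩
  · intro hcard
    by_contra hjt
    have : #{i ∈ range n | x i ≤ t} ≤ #(range j) := card_le_card fun i hi => by
      rw [mem_filter, mem_range] at hi
      by_contra hij
      exact hjt ((hmono j i (by simpa using hij) hi.1).trans hi.2)
    simp at this; omega

lemma floor_mul_lt_self {q : ℝ} (hq : q < 1) {n : ℕ} (hn : n ≠ 0) : ⌊q * n⌋₊ < n := by
  rw [Nat.floor_lt' hn]
  have : (0 : ℝ) < n := by positivity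
  nlinarith

lemma MonotoneOn.ae_continuousAt {f : ℝ → ℝ} {s : Set ℝ} (hf : MonotoneOn f s)
    (hs : IsOpen s) : ∀ᵐ x, x ∈ s → ContinuousAt f x := by
  filter_upwards [hf.countable_not_continuousWithinAt.ae_notMem volume] with x hx hxs
  exact (not_not.1 fun h => hx ⟨hxs, h⟩).continuousAt (hs.mem_nhds hxs)

noncomputable def quantile (G : ℝ → ℝ) (q : ℝ) : ℝ :=
  sInf {t | t ∈ Set.Icc (0 : ℝ) 1 ∧ q ≤ G t}

section Quantile

variable {G : ℝ → ℝ} {m q t : ℝ}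

lemma quantile_nonneg : 0 ≤ quantile G q :=
  Real.sInf_nonneg fun _ ht => ht.1.1

lemma quantile_le (ht : t ∈ Set.Icc 0 1) (hq : q ≤ G t) : quantile G q ≤ t :=
  csInf_le ⟨0, fun _ hs => hs.1.1⟩ ⟨ht, hq⟩

lemma lt_of_lt_quantile (ht : t ∈ Set.Icc 0 1) (h : t < quantile G q) : G t < q :=
  lt_of_not_ge fun hq => (quantile_le ht hq).not_gt h

lemma monotoneOn_quantile (hm : m ∈ Set.Icc 0 1) (hGm : 1 ≤ G m) :
    MonotoneOn (quantile G) (Set.Iic 1) := by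
  intro q _ q' hq' hle
  unfold quantile
  exact csInf_le_csInf ⟨0, fun _ hs => hs.1.1⟩ ⟨m, hm, (Set.mem_Iic.1 hq').trans hGm⟩
    fun _ hs => ⟨hs.1, hle.trans hs.2⟩

lemma lt_of_quantile_lt (hG : MonotoneOn G (Set.Icc 0 1)) (hm : m ∈ Set.Icc 0 1)
    (hGm : 1 ≤ G m) (hq : q < 1) (hcont : ContinuousWithinAt (quantile G) (Set.Ioi q) q)
    (ht : t ≤ 1) (h : quantile G q < t) : q < G t := by
  obtain ⟨q', hq't, hq'⟩ :=
    ((hcont.eventually (gt_mem_nhds h)).and (Ioo_mem_nhdsGT hq)).exists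
  rw [quantile] at hq't
  obtain ⟨s, ⟨hs, hq's⟩, hst⟩ :=
    exists_lt_of_csInf_lt (by exact ⟨m, hm, hq'.2.le.trans hGm⟩) hq't
  exact hq'.1.trans_le (hq's.trans (hG hs ⟨hs.1.trans hst.le, ht⟩ hst.le))

lemma ae_continuousAt_quantile (hm : m ∈ Set.Icc 0 1) (hGm : 1 ≤ G m) :
    ∀ᵐ q, q ∈ Set.Ioo 0 1 → ContinuousAt (quantile G) q :=
  ((monotoneOn_quantile hm hGm).mono fun _ h => Set.mem_Iic.2 h.2.le).ae_continuousAt isOpen_Ioo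

end Quantile

section OrderStatistic

variable {a : ℕ → ℕ → ℝ} {G : ℝ → ℝ} {m q : ℝ}

lemma eventually_lt_orderStatistic
    (hmono : ∀ n j j', j ≤ j' → j' < n → a n j ≤ a n j')
    (hmem : ∀ n j, j < n → a n j ∈ Set.Icc 0 m) (hm : m ≤ 1) (hGm : 1 ≤ G m)
    (hlim : ∀ t ∈ Set.Ioo 0 m, Tendsto (fun n => empiricalCDF (a n) n t) atTop (𝓝 (G t)))
    (hq : q < 1) {b : ℝ} (hb : b < quantile G q) :
    ∀ᶠ n in atTop, b < a n ⌊q * n⌋₊ := by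
  have hfloor : ∀ᶠ n : ℕ in atTop, ⌊q * n⌋₊ < n :=
    (eventually_ne_atTop 0).mono fun n hn => floor_mul_lt_self hq hn
  rcases lt_or_ge b 0 with hb0 | hb0
  · exact hfloor.mono fun n hn => hb0.trans_le (hmem n _ hn).1
  have hm0 : 0 ≤ m := (hmem 1 0 one_pos).1.trans (hmem 1 0 one_pos).2
  have hQm : quantile G q ≤ m := quantile_le ⟨hm0, hm⟩ (hq.le.trans hGm)
  obtain ⟨t, hbt, htQ⟩ := exists_between hb
  have hGt : G t < q := lt_of_lt_quantile ⟨by linarith, by linarith⟩ htQ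
  filter_upwards [(hlim t ⟨by linarith, by linarith⟩).eventually (gt_mem_nhds hGt), hfloor]
    with n hecdf hn
  have hcard : (#{i ∈ range n | a n i ≤ t} : ℝ) < ⌊q * n⌋₊ + 1 := by
    rw [← empiricalCDF.mul_natCast]
    have : (0 : ℝ) < n := by exact_mod_cast hn.pos
    nlinarith [Nat.lt_floor_add_one (q * n)]
  have hat : t < a n ⌊q * n⌋₊ := lt_of_not_ge fun hle =>
    hcard.not_ge (by exact_mod_cast (le_iff_add_one_le_card_filter (hmono n) hn).1 hle)
  linarith

lemma eventually_orderStatistic_lt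
    (hmono : ∀ n j j', j ≤ j' → j' < n → a n j ≤ a n j')
    (hmem : ∀ n j, j < n → a n j ∈ Set.Icc 0 m) (hm : m ≤ 1) (hGm : 1 ≤ G m)
    (hG : MonotoneOn G (Set.Icc 0 1))
    (hlim : ∀ t ∈ Set.Ioo 0 m, Tendsto (fun n => empiricalCDF (a n) n t) atTop (𝓝 (G t)))
    (hq : q ∈ Set.Ico 0 1) (hcont : ContinuousWithinAt (quantile G) (Set.Ioi q) q) {b : ℝ}
    (hb : quantile G q < b) :
    ∀ᶠ n in atTop, a n ⌊q * n⌋₊ < b := by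
  have hfloor : ∀ᶠ n : ℕ in atTop, ⌊q * n⌋₊ < n :=
    (eventually_ne_atTop 0).mono fun n hn => floor_mul_lt_self hq.2 hn
  rcases lt_or_ge m b with hmb | hbm
  · exact hfloor.mono fun n hn => (hmem n _ hn).2.trans_lt hmb
  have hm0 : 0 ≤ m := (hmem 1 0 one_pos).1.trans (hmem 1 0 one_pos).2
  obtain ⟨t, hQt, htb⟩ := exists_between hb
  have hQ0 : 0 ≤ quantile G q := quantile_nonneg
  have hqGt : q < G t := lt_of_quantile_lt hG ⟨hm0, hm⟩ hGm hq.2 hcont (by linarith) hQt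
  obtain ⟨c, hqc, hcG⟩ := exists_between hqGt
  have hgap : Tendsto (fun n : ℕ => (c - q) * n) atTop atTop :=
    tendsto_natCast_atTop_atTop.const_mul_atTop (by linarith)
  filter_upwards [(hlim t ⟨by linarith, by linarith⟩).eventually (lt_mem_nhds hcG),
    hgap.eventually_gt_atTop 1, hfloor] with n hecdf hn1 hn
  have hcard : (⌊q * n⌋₊ : ℝ) + 1 < #{i ∈ range n | a n i ≤ t} := by
    rw [← empiricalCDF.mul_natCast]
    have : (0 : ℝ) < n := by exact_mod_cast hn.pos
    nlinarith [Nat.floor_le (mul_nonneg hq.1 this.le)]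
  have hat : a n ⌊q * n⌋₊ ≤ t :=
    (le_iff_add_one_le_card_filter (hmono n) hn).2 (by exact_mod_cast hcard.le)
  linarith

lemma tendsto_orderStatistic_quantile
    (hmono : ∀ n j j', j ≤ j' → j' < n → a n j ≤ a n j')
    (hmem : ∀ n j, j < n → a n j ∈ Set.Icc 0 m) (hm : m ≤ 1) (hGm : 1 ≤ G m)
    (hG : MonotoneOn G (Set.Icc 0 1))
    (hlim : ∀ t ∈ Set.Ioo 0 m, Tendsto (fun n => empiricalCDF (a n) n t) atTop (𝓝 (G t)))
    (hq : q ∈ Set.Ico 0 1) (hcont : ContinuousWithinAt (quantile G) (Set.Ioi q) q) :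
    Tendsto (fun n : ℕ => a n ⌊q * n⌋₊) atTop (𝓝 (quantile G q)) :=
  tendsto_order.2 ⟨fun _ hb => eventually_lt_orderStatistic hmono hmem hm hGm hlim hq.2 hb,
    fun _ hb => eventually_orderStatistic_lt hmono hmem hm hGm hG hlim hq hcont hb⟩

end OrderStatistic

noncomputable def stepFunction (n : ℕ) (s : Finset ℕ) (g : ℕ → ℝ) (q : ℝ) : ℝ :=
  ∑ j ∈ s, (Set.Ico ((j : ℝ) / n) ((j + 1) / n)).indicator (fun _ => g j) q

namespace stepFunction

variable {n : ℕ} {s : Finset ℕ} {g : ℕ → ℝ} {q : ℝ}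

lemma mem_Ico_div_iff (hn : n ≠ 0) {j : ℕ} :
    q ∈ Set.Ico ((j : ℝ) / n) ((j + 1) / n) ↔ 0 ≤ q ∧ ⌊q * n⌋₊ = j := by
  have hn' : (0 : ℝ) < n := by positivity
  rw [Set.mem_Ico, div_le_iff₀ hn', lt_div_iff₀ hn']
  constructor
  · rintro ⟨h1, h2⟩
    have hq : 0 ≤ q := nonneg_of_mul_nonneg_left ((j.cast_nonneg).trans h1) hn'
    exact ⟨hq, (Nat.floor_eq_iff (by positivity)).2 ⟨h1, h2⟩⟩
  · rintro ⟨hq, rfl⟩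
    exact ⟨Nat.floor_le (by positivity), Nat.lt_floor_add_one _⟩

lemma apply (hn : n ≠ 0) :
    stepFunction n s g q = if 0 ≤ q ∧ ⌊q * n⌋₊ ∈ s then g ⌊q * n⌋₊ else 0 := by
  simp only [stepFunction, Set.indicator_apply, mem_Ico_div_iff hn]
  by_cases hq : 0 ≤ q
  · simp [hq, sum_ite_eq]
  · simp [hq]

lemma measurable : Measurable (stepFunction n s g) :=
  Finset.measurable_sum _ fun _ _ => measurable_const.indicator measurableSet_Ico

lemma integral : ∫ q, stepFunction n s g q = (1 / (n : ℝ)) * ∑ j ∈ s, g j := by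
  have hint : ∀ j ∈ s,
      Integrable ((Set.Ico ((j : ℝ) / n) ((j + 1) / n)).indicator fun _ => g j) :=
    fun j _ => (integrable_indicator_iff measurableSet_Ico).2 (integrableOn_const (by simp))
  simp only [stepFunction]
  rw [integral_finsetSum _ hint, mul_sum]
  refine sum_congr rfl fun j _ => ?_
  rw [integral_indicator_const _ measurableSet_Ico, measureReal_def, Real.volume_Ico,
    ENNReal.toReal_ofReal (by rw [← sub_div]; simp), smul_eq_mul]
  ring

end stepFunction

lemma eventually_floor_mul_mem_Ico_iff {β q : ℝ} (hβ : 0 ≤ β) (hqβ : q ≠ β) (hq1 : q ≠ 1) :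
    ∀ᶠ n : ℕ in atTop, (0 ≤ q ∧ ⌊q * n⌋₊ ∈ Ico ⌊β * n⌋₊ n) ↔ q ∈ Set.Ioo β 1 := by
  rcases hqβ.lt_or_gt with hqβ | hβq
  · have hgap : ∀ᶠ n : ℕ in atTop, 1 ≤ (β - q) * n :=
      (tendsto_natCast_atTop_atTop.const_mul_atTop (sub_pos.2 hqβ)).eventually_ge_atTop 1
    filter_upwards [hgap] with n hn
    refine iff_of_false ?_ fun h => h.1.not_gt hqβ
    rintro ⟨hq0, hmem⟩
    have : ⌊q * n⌋₊ + 1 ≤ ⌊β * n⌋₊ :=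
      Nat.le_floor (by push_cast; nlinarith [Nat.floor_le (mul_nonneg hq0 n.cast_nonneg)])
    have := (mem_Ico.1 hmem).1
    omega
  rcases hq1.lt_or_gt with hq1 | hq1
  · filter_upwards [eventually_ne_atTop 0] with n hn
    exact iff_of_true ⟨hβ.trans hβq.le, mem_Ico.2 ⟨Nat.floor_le_floor
      (mul_le_mul_of_nonneg_right hβq.le n.cast_nonneg), floor_mul_lt_self hq1 hn⟩⟩ ⟨hβq, hq1⟩
  · refine .of_forall fun n => iff_of_false (fun h => (mem_Ico.1 h.2).2.not_ge ?_)
      fun h => h.2.not_gt hq1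
    exact Nat.le_floor (by nlinarith [n.cast_nonneg (α := ℝ)])

lemma tendsto_riemannSum {f : ℕ → ℕ → ℝ} {φ : ℝ → ℝ} {β C : ℝ} (hβ : β ∈ Set.Icc 0 1)
    (hf : ∀ n j, j < n → |f n j| ≤ C)
    (hlim : ∀ᵐ q, q ∈ Set.Ioo β 1 → Tendsto (fun n : ℕ => f n ⌊q * n⌋₊) atTop (𝓝 (φ q))) :
    Tendsto (fun n : ℕ => (1 / (n : ℝ)) * ∑ j ∈ Ico ⌊β * n⌋₊ n, f n j) atTop
      (𝓝 (∫ q in β..1, φ q)) := by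
  set ψ : ℕ → ℝ → ℝ := fun n => stepFunction n (Ico ⌊β * n⌋₊ n) (f n)
  have hC : 0 ≤ C := (abs_nonneg _).trans (hf 1 0 one_pos)
  have hψ_lim : ∀ᵐ q, Tendsto (fun n => ψ n q) atTop (𝓝 ((Set.Ioo β 1).indicator φ q)) := by
    filter_upwards [hlim, (Set.toFinite {β, 1}).countable.ae_notMem volume] with q hq hqβ1
    simp only [Set.mem_insert_iff, Set.mem_singleton_iff, not_or] at hqβ1
    have hev :=
      (eventually_floor_mul_mem_Ico_iff hβ.1 hqβ1.1 hqβ1.2).and (eventually_ne_atTop 0)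
    by_cases hmem : q ∈ Set.Ioo β 1
    · rw [Set.indicator_of_mem hmem]
      refine (hq hmem).congr' (hev.mono fun n hn => ?_)
      simp only [ψ, stepFunction.apply hn.2, if_pos (hn.1.2 hmem)]
    · rw [Set.indicator_of_notMem hmem]
      refine tendsto_const_nhds.congr' (hev.mono fun n hn => ?_)
      simp only [ψ, stepFunction.apply hn.2, if_neg (mt hn.1.1 hmem)]
  have hψ_bound : ∀ᶠ n in atTop, ∀ᵐ q, ‖ψ n q‖ ≤ (Set.Icc 0 1).indicator (fun _ => C) q := by
    filter_upwards [eventually_ne_atTop 0] with n hn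
    refine .of_forall fun q => ?_
    simp only [ψ, stepFunction.apply hn]
    split_ifs with h
    · have hq1 : q ≤ 1 := by
        have := (Nat.floor_lt' hn).1 (mem_Ico.1 h.2).2
        have : (0 : ℝ) < n := by positivity
        nlinarith
      rw [Set.indicator_of_mem (Set.mem_Icc.2 ⟨h.1, hq1⟩), Real.norm_eq_abs]
      exact hf n _ (mem_Ico.1 h.2).2
    · rw [norm_zero]
      exact Set.indicator_nonneg (fun _ _ => hC) q
  have hbound_int : Integrable ((Set.Icc (0 : ℝ) 1).indicator fun _ => C) :=
    (integrable_indicator_iff measurableSet_Icc).2 (integrableOn_const (by simp))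
  have hDCT := tendsto_integral_filter_of_dominated_convergence _
    (.of_forall fun n => stepFunction.measurable.aestronglyMeasurable) hψ_bound hbound_int hψ_lim
  rw [integral_indicator measurableSet_Ioo, ← integral_Ioc_eq_integral_Ioo,
    ← intervalIntegral.integral_of_le hβ.2] at hDCT
  simpa only [ψ, stepFunction.integral] using hDCT

theorem stmt_4_general
    -- the triangular array of independent Bernoulli random variables
    {Ω : ℕ → Type*} [∀ d, MeasurableSpace (Ω d)]
    (μ : ∀ d, Measure (Ω d)) [∀ d, IsProbabilityMeasure (μ d)]
    (p : ℕ → ℕ → ℝ) (hp : ∀ d i, i < d → p d i ∈ Set.Icc (0 : ℝ) 1)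
    (X : ∀ d, ℕ → Ω d → ℝ)
    (hmeas : ∀ d i, Measurable (X d i))
    (hval : ∀ d i ω, X d i ω = 0 ∨ X d i ω = 1)
    (hbern : ∀ d i, i < d → μ d {ω | X d i ω = 1} = ENNReal.ofReal (p d i))
    -- transformed quantities
    (pstar : ℕ → ℕ → ℝ)
    (hpstar : ∀ d i, pstar d i = min (p d i) (1 - p d i))
    (Xstar : ∀ d, ℕ → Ω d → ℝ)
    (hXstar : ∀ d i ω,
      Xstar d i ω = if p d i ≤ 1 / 2 then X d i ω else 1 - X d i ω)
    -- an ordering of {0,…,d−1} making `pstar` nondecreasing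
    (ord : ℕ → ℕ → ℕ)
    (hord_bij : ∀ d, Set.BijOn (ord d) (Set.Iio d) (Set.Iio d))
    (hord_mono : ∀ d j j', j ≤ j' → j' < d →
      pstar d (ord d j) ≤ pstar d (ord d j'))
    -- the stability assumption
    (F : ℝ → ℝ)
    (hF_mono : MonotoneOn F (Set.Icc 0 1))
    (hstab : ∀ t ∈ Set.Icc (0 : ℝ) 1, ContinuousWithinAt F (Set.Icc 0 1) t →
      Tendsto (fun d : ℕ => (1 / (d : ℝ)) *
          ∑ i ∈ Finset.range d, (if p d i ≤ t then (1 : ℝ) else 0))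
        atTop (nhds (F t)))
    -- the transformed cdf and its quantile function
    (Fstar : ℝ → ℝ)
    (hFstar : ∀ t, Fstar t = if t ≤ 1 / 2 then F t + 1 - F (1 - t) else 1)
    (hFstar_cont : ContinuousOn Fstar (Set.Icc 0 1))
    (hFstar_mono : MonotoneOn Fstar (Set.Icc 0 1))
    (Qstar : ℝ → ℝ)
    (hQ : ∀ q, Qstar q = sInf {t | t ∈ Set.Icc (0 : ℝ) 1 ∧ q ≤ Fstar t})
    (β : ℝ) (hβ : β ∈ Set.Ioo (0 : ℝ) 1) :
    -- the normalized sophisticated risk equals the deterministic sum …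
    (∀ d : ℕ,
      (∫ ω, (1 / (d : ℝ)) * ∑ j ∈ Finset.Ico (Nat.floor (β * d)) d,
          (Xstar d (ord d j) ω - pstar d (ord d j)) ^ 2 ∂(μ d))
        = (1 / (d : ℝ)) * ∑ j ∈ Finset.Ico (Nat.floor (β * d)) d,
            pstar d (ord d j) * (1 - pstar d (ord d j))) ∧
    -- … and converges to the limiting integral
    Tendsto (fun d : ℕ => (1 / (d : ℝ)) * ∑ j ∈ Finset.Ico (Nat.floor (β * d)) d,
        pstar d (ord d j) * (1 - pstar d (ord d j)))
      atTop (nhds (∫ q in β..(1 : ℝ), Qstar q * (1 - Qstar q))) := by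
  have hord_lt : ∀ d j, j < d → ord d j < d := fun d _ hj => (hord_bij d).mapsTo hj
  refine ⟨fun d => ?_, ?_⟩
  · have hsq : ∀ i ω, (Xstar d i ω - pstar d i) ^ 2 = (X d i ω - p d i) ^ 2 := fun i ω => by
      rw [hXstar, hpstar, sq_fold_sub_min]
    have hvar : ∀ i, pstar d i * (1 - pstar d i) = p d i * (1 - p d i) := fun i => by
      rw [hpstar, min_one_sub_mul_one_sub]
    simp only [hsq, hvar]
    exact integral_const_mul_sum_sq_sub_of_bernoulli _ _ (fun _ => hmeas d _) (fun _ => hval d _)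
      (fun j hj => (hp d _ (hord_lt d j (mem_Ico.1 hj).2)).1)
      (fun j hj => hbern d _ (hord_lt d j (mem_Ico.1 hj).2))
  have hpstar_mem : ∀ d j, j < d → pstar d (ord d j) ∈ Set.Icc 0 (1 / 2) := fun d j hj => by
    rw [hpstar]; exact min_one_sub_mem_Icc (hp d _ (hord_lt d j hj))
  have hecdf : ∀ t ∈ Set.Ioo 0 (1 / 2),
      Tendsto (fun d => empiricalCDF (fun j => pstar d (ord d j)) d t) atTop (𝓝 (Fstar t)) :=
    fun t ht => (tendsto_empiricalCDF_min_one_sub hF_mono (fun s hs => by rw [hFstar, if_pos hs])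
      hFstar_cont hstab ht).congr fun d => by
        rw [empiricalCDF.comp_of_bijOn (hord_bij d)]
        exact congrArg (empiricalCDF · d t) (funext fun i => (hpstar d i).symm)
  have hFstar_half : Fstar (1 / 2) = 1 := by rw [hFstar, if_pos le_rfl]; norm_num
  obtain rfl : Qstar = quantile Fstar := funext hQ
  refine tendsto_riemannSum (C := 1 / 4) ⟨hβ.1.le, hβ.2.le⟩ (fun d j hj => ?_) ?_
  · obtain ⟨h0, h1⟩ := hpstar_mem d j hj
    exact abs_le.2 ⟨by nlinarith, by nlinarith⟩
  filter_upwards [ae_continuousAt_quantile ⟨by norm_num, by norm_num⟩ hFstar_half.ge]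
    with q hQ_cont hqβ
  have hq : q ∈ Set.Ioo 0 1 := ⟨hβ.1.trans hqβ.1, hqβ.2⟩
  have hlim := tendsto_orderStatistic_quantile hord_mono hpstar_mem (by norm_num)
    hFstar_half.ge hFstar_mono hecdf ⟨hq.1.le, hq.2⟩ (hQ_cont hq).continuousWithinAt
  exact hlim.mul (tendsto_const_nhds.sub hlim)

theorem stmt_4
    -- the triangular array of independent Bernoulli random variables
    {Ω : ℕ → Type*} [∀ d, MeasurableSpace (Ω d)]
    (μ : ∀ d, Measure (Ω d)) [∀ d, IsProbabilityMeasure (μ d)]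
    (p : ℕ → ℕ → ℝ) (hp : ∀ d i, i < d → p d i ∈ Set.Icc (0 : ℝ) 1)
    (X : ∀ d, ℕ → Ω d → ℝ)
    (hmeas : ∀ d i, Measurable (X d i))
    (hval : ∀ d i ω, X d i ω = 0 ∨ X d i ω = 1)
    (hbern : ∀ d i, i < d → μ d {ω | X d i ω = 1} = ENNReal.ofReal (p d i))
    (hindep : ∀ d, iIndepFun
      (fun i : Fin d => X d (i : ℕ)) (μ d))
    -- transformed quantities
    (pstar : ℕ → ℕ → ℝ)
    (hpstar : ∀ d i, pstar d i = min (p d i) (1 - p d i))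
    (Xstar : ∀ d, ℕ → Ω d → ℝ)
    (hXstar : ∀ d i ω,
      Xstar d i ω = if p d i ≤ 1 / 2 then X d i ω else 1 - X d i ω)
    -- an ordering of {0,…,d−1} making `pstar` nondecreasing
    (ord : ℕ → ℕ → ℕ)
    (hord_bij : ∀ d, Set.BijOn (ord d) (Set.Iio d) (Set.Iio d))
    (hord_mono : ∀ d j j', j ≤ j' → j' < d →
      pstar d (ord d j) ≤ pstar d (ord d j'))
    -- the stability assumption
    (F : ℝ → ℝ)
    (hF_mono : MonotoneOn F (Set.Icc 0 1))
    (hF_rc : ∀ t ∈ Set.Ico (0 : ℝ) 1,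
      Tendsto F (nhdsWithin t (Set.Ioi t)) (nhds (F t)))
    (hF0 : Tendsto F (nhdsWithin 0 (Set.Ioi 0)) (nhds 0))
    (hF1 : Tendsto F (nhdsWithin 1 (Set.Iio 1)) (nhds 1))
    (hstab : ∀ t ∈ Set.Icc (0 : ℝ) 1, ContinuousWithinAt F (Set.Icc 0 1) t →
      Tendsto (fun d : ℕ => (1 / (d : ℝ)) *
          ∑ i ∈ Finset.range d, (if p d i ≤ t then (1 : ℝ) else 0))
        atTop (nhds (F t)))
    -- the transformed cdf and its quantile function
    (Fstar : ℝ → ℝ)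
    (hFstar : ∀ t, Fstar t = if t ≤ 1 / 2 then F t + 1 - F (1 - t) else 1)
    (hFstar_cont : ContinuousOn Fstar (Set.Icc 0 1))
    (hFstar_mono : MonotoneOn Fstar (Set.Icc 0 1))
    (Qstar : ℝ → ℝ)
    (hQ : ∀ q, Qstar q = sInf {t | t ∈ Set.Icc (0 : ℝ) 1 ∧ q ≤ Fstar t})
    (β : ℝ) (hβ : β ∈ Set.Ioo (0 : ℝ) 1) :
    -- the normalized sophisticated risk equals the deterministic sum …
    (∀ d : ℕ,
      (∫ ω, (1 / (d : ℝ)) * ∑ j ∈ Finset.Ico (Nat.floor (β * d)) d,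
          (Xstar d (ord d j) ω - pstar d (ord d j)) ^ 2 ∂(μ d))
        = (1 / (d : ℝ)) * ∑ j ∈ Finset.Ico (Nat.floor (β * d)) d,
            pstar d (ord d j) * (1 - pstar d (ord d j))) ∧
    -- … and converges to the limiting integral
    Tendsto (fun d : ℕ => (1 / (d : ℝ)) * ∑ j ∈ Finset.Ico (Nat.floor (β * d)) d,
        pstar d (ord d j) * (1 - pstar d (ord d j)))
      atTop (nhds (∫ q in β..(1 : ℝ), Qstar q * (1 - Qstar q))) :=
  stmt_4_general μ p hp X hmeas hval hbern pstar hpstar Xstar hXstar ord hord_bij hord_mono F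
    hF_mono hstab Fstar hFstar hFstar_cont hFstar_mono Qstar hQ β hβ
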